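/- Let X be a finite set of n points with nonnegative weights w_X : X → ℝ≥0, let K : X × X → ℝ be a kernel function, let z > 0, let k ≥ 1 be an integer, and let 0 < ε < 1. Suppose S ⊆ X with weights w_S : S → ℝ≥0 satisfies: for every map φ : X → ℝ^{n+1} (Euclidean space) with ⟨φ(x), φ(y)⟩ = K(x, y) for all x, y ∈ X, and for every set C ⊆ ℝ^{n+1} with |C| = k, cost_z^φ(S, C) lies between (1−ε)·cost_z^φ(X, C) and (1+ε)·cost_z^φ(X, C). Then for every real Hilbert space H, every map φ' : X → H with ⟨φ'(x), φ'(y)⟩ = K(x, y) for all x, y ∈ X, and every set C ⊆ H with |C| = k, cost_z^{φ'}(S, C) lies between (1−ε)·cost_z^{φ'}(X, C) and (1+ε)·cost_z^{φ'}(X, C). -/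

import Mathlib

open scoped NNReal RealInnerProductSpace

/-- Zero-padding linear isometry between Euclidean spaces. -/
noncomputable def padIso (d m : ℕ) (hdm : d ≤ m) :
    EuclideanSpace ℝ (Fin d) →ₗᵢ[ℝ] EuclideanSpace ℝ (Fin m) where
  toLinearMap :=
    { toFun := fun f => WithLp.toLp 2 (fun i : Fin m => if h : (i : ℕ) < d then f ⟨i, h⟩ else 0)
      map_add' := by
        intro f g; ext i
        by_cases h : (i : ℕ) < d <;> simp [h]
      map_smul' := by
        intro c f; ext i
        by_cases h : (i : ℕ) < d <;> simp [h] }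
  norm_map' := by
    intro f
    rw [EuclideanSpace.norm_eq, EuclideanSpace.norm_eq]
    congr 1
    show (∑ i : Fin m, ‖(if h : (i : ℕ) < d then f ⟨i, h⟩ else 0)‖ ^ 2)
        = ∑ i : Fin d, ‖f i‖ ^ 2
    have key : ∀ i : ℕ, ‖(if h : i < d then f ⟨i, h⟩ else 0)‖ ^ 2
        = if h : i < d then ‖f ⟨i, h⟩‖ ^ 2 else 0 := by
      intro i; by_cases h : i < d <;> simp [h]
    calc (∑ i : Fin m, ‖(if h : (i : ℕ) < d then f ⟨i, h⟩ else 0)‖ ^ 2)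
        = ∑ i : Fin m, (fun j : ℕ => if h : j < d then ‖f ⟨j, h⟩‖ ^ 2 else 0) (i : ℕ) :=
          Finset.sum_congr rfl fun i _ => key i
      _ = ∑ i ∈ Finset.range m, (fun j : ℕ => if h : j < d then ‖f ⟨j, h⟩‖ ^ 2 else 0) i :=
          Fin.sum_univ_eq_sum_range (fun j : ℕ => if h : j < d then ‖f ⟨j, h⟩‖ ^ 2 else 0) m
      _ = ∑ i ∈ Finset.range d, (fun j : ℕ => if h : j < d then ‖f ⟨j, h⟩‖ ^ 2 else 0) i := by
          rw [Finset.sum_subset (Finset.range_subset_range.mpr hdm)]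
          intro i _ hi
          exact dif_neg (by simpa using hi)
      _ = ∑ i : Fin d, (fun j : ℕ => if h : j < d then ‖f ⟨j, h⟩‖ ^ 2 else 0) (i : ℕ) :=
          (Fin.sum_univ_eq_sum_range (fun j : ℕ => if h : j < d then ‖f ⟨j, h⟩‖ ^ 2 else 0) d).symm
      _ = ∑ i : Fin d, ‖f i‖ ^ 2 := Finset.sum_congr rfl fun i _ => by
          simp [i.isLt]

lemma padIso_apply (d m : ℕ) (hdm : d ≤ m) (f : EuclideanSpace ℝ (Fin d)) (i : Fin m) :
    padIso d m hdm f i = if h : (i : ℕ) < d then f ⟨i, h⟩ else 0 := rfl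

/-- The kernel `(k,z)`-clustering cost: `cost_z^φ(Q, C) = Σ_{x∈Q} w(x) · (min_{c∈C} ‖φ(x) − c‖)^z`. -/
noncomputable def kcost {α H : Type*} [NormedAddCommGroup H] [InnerProductSpace ℝ H]
    (Q : Finset α) (w : α → ℝ≥0) (φ : α → H) (z : ℝ) (C : Finset H) : ℝ :=
  ∑ x ∈ Q, (w x : ℝ) * (sInf ((fun c => ‖φ x - c‖) '' (C : Set H))) ^ z

set_option maxHeartbeats 1000000 in
/-- If a weighted subset `S ⊆ X` preserves the kernel `(k,z)`-clustering cost up to `1 ± ε` for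
every feature map of `K` into `ℝ^{n+1}` and every `k`-point center set there, then it does so for
every feature map of `K` into an arbitrary real Hilbert space and every `k`-point center set. -/
theorem stmt5.{u} {α : Type*} (n : ℕ) (X : Finset α) (hXcard : X.card = n)
    (w_X : α → ℝ≥0) (K : α → α → ℝ) (z : ℝ) (hz : 0 < z)
    (k : ℕ) (hk : 1 ≤ k) (ε : ℝ) (hε0 : 0 < ε) (hε1 : ε < 1)
    (S : Finset α) (hS : S ⊆ X) (w_S : α → ℝ≥0)
    (hyp : ∀ φ : α → EuclideanSpace ℝ (Fin (n + 1)),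
      (∀ x ∈ X, ∀ y ∈ X, ⟪φ x, φ y⟫ = K x y) →
      ∀ C : Finset (EuclideanSpace ℝ (Fin (n + 1))), C.card = k →
        (1 - ε) * kcost X w_X φ z C ≤ kcost S w_S φ z C ∧
          kcost S w_S φ z C ≤ (1 + ε) * kcost X w_X φ z C) :
    ∀ (H : Type u) [NormedAddCommGroup H] [InnerProductSpace ℝ H] [CompleteSpace H]
      (φ' : α → H), (∀ x ∈ X, ∀ y ∈ X, ⟪φ' x, φ' y⟫ = K x y) →
      ∀ C : Finset H, C.card = k →
        (1 - ε) * kcost X w_X φ' z C ≤ kcost S w_S φ' z C ∧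
          kcost S w_S φ' z C ≤ (1 + ε) * kcost X w_X φ' z C := by
  intro H _ _ _ φ' hφ' C hC
  classical
  set V : Submodule ℝ H := Submodule.span ℝ ((X.image φ' : Finset H) : Set H) with hVdef
  haveI : FiniteDimensional ℝ V := FiniteDimensional.span_of_finite ℝ (Finset.finite_toSet _)
  haveI : CompleteSpace V := FiniteDimensional.complete ℝ V
  have hd : Module.finrank ℝ V ≤ n := by
    calc Module.finrank ℝ V ≤ (X.image φ').card := finrank_span_finset_le_card _
    _ ≤ X.card := Finset.card_image_le
    _ = n := hXcard
  set d := Module.finrank ℝ V with hddef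
  have hdn : d ≤ n + 1 := by omega
  set b := stdOrthonormalBasis ℝ V with hbdef
  set L : V →ₗᵢ[ℝ] EuclideanSpace ℝ (Fin (n + 1)) :=
    (padIso d (n + 1) hdn).comp b.repr.toLinearIsometry with hLdef
  set u : EuclideanSpace ℝ (Fin (n + 1)) := EuclideanSpace.single (Fin.last n) (1 : ℝ)
    with hudef
  have hu : ‖u‖ = 1 := by simp [hudef]
  have hLu : ∀ v : V, ⟪L v, u⟫ = 0 := by
    intro v
    rw [hudef, EuclideanSpace.inner_single_right]
    have : (L v) (Fin.last n) = 0 := by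
      show padIso d (n + 1) hdn (b.repr v) (Fin.last n) = 0
      rw [padIso_apply, dif_neg]
      simp [Fin.last]
      omega
    simp [this]
  set P := V.orthogonalProjectionOnto with hPdef
  have hmem : ∀ x ∈ X, φ' x ∈ V := by
    intro x hx
    apply Submodule.subset_span
    simp only [Finset.coe_image]
    exact Set.mem_image_of_mem _ hx
  have hPx : ∀ x ∈ X, ((P (φ' x)) : H) = φ' x := fun x hx =>
    Submodule.starProjection_eq_self_iff.mpr (hmem x hx)
  set φ : α → EuclideanSpace ℝ (Fin (n + 1)) := fun x => L (P (φ' x)) with hφdef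
  have hinner : ∀ x ∈ X, ∀ y ∈ X, ⟪φ x, φ y⟫ = K x y := by
    intro x hx y hy
    rw [hφdef]
    simp only
    rw [L.inner_map_map, Submodule.coe_inner, hPx x hx, hPx y hy]
    exact hφ' x hx y hy
  set g : H → EuclideanSpace ℝ (Fin (n + 1)) := fun c => L (P c) + ‖c - (P c : H)‖ • u
    with hgdef
  have hdist : ∀ x ∈ X, ∀ c : H, ‖φ x - g c‖ = ‖φ' x - c‖ := by
    intro x hx c
    set r : ℝ := ‖c - (P c : H)‖ with hrdef
    have hr0 : 0 ≤ r := norm_nonneg _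
    have h1 : φ x - g c = L (P (φ' x) - P c) - r • u := by
      rw [hφdef, hgdef]
      simp only [map_sub]
      abel
    have hi0 : ⟪L (P (φ' x) - P c), r • u⟫ = 0 := by
      rw [real_inner_smul_right, hLu]; ring
    have h2 : ‖φ x - g c‖ ^ 2 = ‖(P (φ' x) - P c : V)‖ ^ 2 + r ^ 2 := by
      rw [h1, norm_sub_sq_real, hi0, L.norm_map, norm_smul, hu]
      rw [Real.norm_of_nonneg hr0]
      ring
    have hcoe : ((P (φ' x) - P c : V) : H) = φ' x - (P c : H) := by
      rw [Submodule.coe_sub, hPx x hx]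
    have hmem2 : φ' x - (P c : H) ∈ V := Submodule.sub_mem _ (hmem x hx) (P c).2
    have hperp : c - (P c : H) ∈ Vᗮ := Submodule.sub_starProjection_mem_orthogonal (K := V) c
    have hio : ⟪φ' x - (P c : H), c - (P c : H)⟫ = 0 :=
      (Submodule.mem_orthogonal V _).mp hperp _ hmem2
    have h3 : φ' x - c = (φ' x - (P c : H)) - (c - (P c : H)) := by abel
    have h4 : ‖φ' x - c‖ ^ 2 = ‖φ' x - (P c : H)‖ ^ 2 + r ^ 2 := by
      rw [h3, norm_sub_sq_real, hio, hrdef]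
      ring
    have h5 : ‖(P (φ' x) - P c : V)‖ = ‖φ' x - (P c : H)‖ := by
      rw [← hcoe]; rfl
    have h6 : ‖φ x - g c‖ ^ 2 = ‖φ' x - c‖ ^ 2 := by rw [h2, h4, h5]
    have h7 := congrArg Real.sqrt h6
    rwa [Real.sqrt_sq (norm_nonneg _), Real.sqrt_sq (norm_nonneg _)] at h7
  obtain ⟨c₀, hc₀⟩ : C.Nonempty := Finset.card_pos.mp (by omega)
  set M : ℝ := (∑ x ∈ X, (‖φ x‖ + ‖φ x - g c₀‖)) + ∑ c ∈ C, ‖g c‖ with hMdef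
  have hsum1 : 0 ≤ ∑ x ∈ X, (‖φ x‖ + ‖φ x - g c₀‖) :=
    Finset.sum_nonneg fun x _ => by positivity
  have hsum2 : 0 ≤ ∑ c ∈ C, ‖g c‖ := Finset.sum_nonneg fun c _ => norm_nonneg _
  have hM0 : 0 ≤ M := by rw [hMdef]; linarith
  have hM1 : ∀ x ∈ X, ‖φ x‖ + ‖φ x - g c₀‖ ≤ M := by
    intro x hx
    have := Finset.single_le_sum (f := fun x => ‖φ x‖ + ‖φ x - g c₀‖)
      (fun y _ => by positivity) hx
    rw [hMdef]; linarith
  have hM2 : ∀ c ∈ C, ‖g c‖ ≤ M := by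
    intro c hc
    have := Finset.single_le_sum (f := fun c => ‖g c‖) (fun y _ => norm_nonneg _) hc
    rw [hMdef]; linarith
  set p : ℕ → EuclideanSpace ℝ (Fin (n + 1)) := fun j => (M + j + 1) • u with hpdef
  have hp_norm : ∀ j : ℕ, ‖p j‖ = M + j + 1 := by
    intro j
    rw [hpdef]
    simp only
    have hj : (0:ℝ) ≤ j := Nat.cast_nonneg j
    have hpos : 0 ≤ M + (j:ℝ) + 1 := by linarith
    rw [norm_smul, hu, mul_one, Real.norm_of_nonneg hpos]
  set B : Finset (EuclideanSpace ℝ (Fin (n + 1))) :=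
    (Finset.range (k - (C.image g).card)).image p with hBdef
  have hgp : ∀ c ∈ C, ∀ j : ℕ, g c ≠ p j := by
    intro c hc j h
    have h2 := hM2 c hc
    rw [h, hp_norm] at h2
    have : (0:ℝ) ≤ j := Nat.cast_nonneg j
    linarith
  have hdisj : Disjoint (C.image g) B := by
    rw [Finset.disjoint_left]
    intro a ha hb
    obtain ⟨c, hc, rfl⟩ := Finset.mem_image.mp ha
    obtain ⟨j, _, hj⟩ := Finset.mem_image.mp hb
    exact hgp c hc j hj.symm
  have hpinj : ∀ i j : ℕ, p i = p j → i = j := by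
    intro i j h
    have := congrArg norm h
    rw [hp_norm, hp_norm] at this
    exact_mod_cast (by linarith : (i:ℝ) = j)
  have hcardB : B.card = k - (C.image g).card := by
    rw [hBdef, Finset.card_image_of_injOn (fun a _ b _ h => hpinj a b h),
      Finset.card_range]
  have hcardCg : (C.image g).card ≤ k := le_trans Finset.card_image_le (le_of_eq hC)
  set C'' : Finset (EuclideanSpace ℝ (Fin (n + 1))) := C.image g ∪ B with hC''def
  have hcard : C''.card = k := by
    rw [hC''def, Finset.card_union_of_disjoint hdisj, hcardB]
    omega
  have hsInf : ∀ x ∈ X,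
      sInf ((fun c' => ‖φ x - c'‖) '' (C'' : Set (EuclideanSpace ℝ (Fin (n + 1)))))
        = sInf ((fun c => ‖φ' x - c‖) '' (C : Set H)) := by
    intro x hx
    set A : Set ℝ := (fun c => ‖φ' x - c‖) '' (C : Set H) with hAdef
    set T : Set ℝ := (fun c' => ‖φ x - c'‖) '' (C'' : Set (EuclideanSpace ℝ (Fin (n + 1))))
      with hTdef
    have hA_fin : A.Finite := (C.finite_toSet).image _
    have hT_fin : T.Finite := (C''.finite_toSet).image _
    have hA_ne : A.Nonempty := ⟨_, ⟨c₀, hc₀, rfl⟩⟩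
    have hT_ne : T.Nonempty := by
      refine ⟨_, ⟨g c₀, ?_, rfl⟩⟩
      rw [hC''def]
      exact_mod_cast Finset.mem_union_left _ (Finset.mem_image_of_mem g hc₀)
    have hAsub : A ⊆ T := by
      rintro a ⟨c, hc, rfl⟩
      refine ⟨g c, ?_, hdist x hx c⟩
      rw [hC''def]
      exact_mod_cast Finset.mem_union_left _ (Finset.mem_image_of_mem g hc)
    refine le_antisymm (csInf_le_csInf hT_fin.bddBelow hA_ne hAsub) ?_
    refine le_csInf hT_ne ?_
    rintro b ⟨c', hc', rfl⟩
    rw [hC''def] at hc'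
    rcases Finset.mem_union.mp (by exact_mod_cast hc') with h | h
    · obtain ⟨c, hc, rfl⟩ := Finset.mem_image.mp h
      show sInf A ≤ ‖φ x - g c‖
      rw [hdist x hx c]
      exact csInf_le hA_fin.bddBelow ⟨c, hc, rfl⟩
    · obtain ⟨j, _, rfl⟩ := Finset.mem_image.mp h
      have h1 : sInf A ≤ ‖φ' x - c₀‖ := csInf_le hA_fin.bddBelow ⟨c₀, hc₀, rfl⟩
      have h2 : ‖φ' x - c₀‖ = ‖φ x - g c₀‖ := (hdist x hx c₀).symm
      have h3 : ‖p j‖ - ‖φ x‖ ≤ ‖φ x - p j‖ := by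
        rw [norm_sub_rev]; exact norm_sub_norm_le _ _
      have h4 := hp_norm j
      have h5 := hM1 x hx
      have h6 : (0:ℝ) ≤ j := Nat.cast_nonneg j
      show sInf A ≤ ‖φ x - p j‖
      linarith
  have hkc : ∀ (Q : Finset α) (w : α → ℝ≥0), Q ⊆ X →
      kcost Q w φ z C'' = kcost Q w φ' z C := by
    intro Q w hQ
    unfold kcost
    exact Finset.sum_congr rfl fun x hx => by rw [hsInf x (hQ hx)]
  obtain ⟨h1, h2⟩ := hyp φ hinner C'' hcard
  rw [hkc X w_X (subset_refl X), hkc S w_S hS] at h1 h2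
  exact ⟨h1, h2⟩
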